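/- arXiv:1601.04146 — 9 statements merged into one kernel-verified Lean document; each statement's English description precedes it below -/
import Mathlib

section
/- For every finite nonempty set A of integers (or in any abelian group), |kA| ≥ |A - A|^{1 - 2^{-k}}, where kA denotes the k-fold sumset A + ... + A. -/
open Pointwise
open scoped Finset

/-!
Ruzsa's triangle inequality for `A`, `nA`, `A` gives `|A - A| · |nA| ≤ |(n+1)A|²`. Taking square
roots, a bound `|nA| ≥ |A - A|^e` becomes `|(n+1)A| ≥ |A - A|^((1 + e)/2)`; starting from
`|0A| = 1`, i.e. `e = 0`, this reaches `e = 1 - 2⁻ᵏ` after `k` steps.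
-/

lemma Finset.card_sub_mul_card_nsmul_le_sq {G : Type*} [AddCommGroup G] [DecidableEq G]
    (A : Finset G) (n : ℕ) : #(A - A) * #(n • A) ≤ #((n + 1) • A) ^ 2 := by
  have h := Finset.ruzsa_triangle_inequality_sub_add_add A (n • A) A
  rwa [← succ_nsmul', ← sq] at h

lemma Real.rpow_one_sub_two_pow_neg_le {D : ℝ} {s : ℕ → ℝ} (hD : 0 ≤ D) (hs : ∀ n, 0 ≤ s n)
    (h0 : 1 ≤ s 0) (hstep : ∀ n, D * s n ≤ s (n + 1) ^ 2) (k : ℕ) :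
    D ^ ((1 : ℝ) - 2 ^ (-(k : ℝ))) ≤ s k := by
  induction k with
  | zero => simpa [Real.rpow_zero] using h0
  | succ n ih =>
    have hexp : (1 : ℝ) - 2 ^ (-((n + 1 : ℕ) : ℝ)) = (1 + (1 - 2 ^ (-(n : ℝ)))) * (1 / 2) := by
      rw [Nat.cast_succ, neg_add, Real.rpow_add two_pos, Real.rpow_neg_one]
      ring
    have he : 0 ≤ 1 - (2 : ℝ) ^ (-(n : ℝ)) :=
      sub_nonneg.2 (Real.rpow_le_one_of_one_le_of_nonpos one_le_two (by simp))
    calc D ^ ((1 : ℝ) - 2 ^ (-((n + 1 : ℕ) : ℝ)))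
        = √(D * D ^ (1 - 2 ^ (-(n : ℝ)))) := by
          rw [hexp, Real.rpow_mul hD, Real.rpow_add_of_nonneg hD zero_le_one he, Real.rpow_one,
            Real.sqrt_eq_rpow]
      _ ≤ √(D * s n) := Real.sqrt_le_sqrt (mul_le_mul_of_nonneg_left ih hD)
      _ ≤ √(s (n + 1) ^ 2) := Real.sqrt_le_sqrt (hstep n)
      _ = s (n + 1) := Real.sqrt_sq (hs _)

theorem stmt_0_general {G : Type*} [AddCommGroup G] [DecidableEq G]
    (A : Finset G) (k : ℕ) :
    ((A - A).card : ℝ) ^ ((1 : ℝ) - 2 ^ (-(k : ℝ))) ≤ ((k • A).card : ℝ) :=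
  Real.rpow_one_sub_two_pow_neg_le (s := fun n ↦ (#(n • A) : ℝ)) (Nat.cast_nonneg _)
    (fun _ ↦ Nat.cast_nonneg _) (by simp)
    (fun n ↦ mod_cast A.card_sub_mul_card_nsmul_le_sq n) k

theorem stmt_0 {G : Type*} [AddCommGroup G] [DecidableEq G]
    (A : Finset G) (hA : A.Nonempty) (k : ℕ) (hk : 1 ≤ k) :
    ((A - A).card : ℝ) ^ ((1 : ℝ) - 2 ^ (-(k : ℝ))) ≤ ((k • A).card : ℝ) :=
  stmt_0_general A k
end

section
/- (Plünnecke-type inequality, difference version) If A is a finite nonempty subset of a commutative group with |A - A| ≤ t·|A|, then for every positive integer k, |kA| ≤ t^k · |A|. -/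
open Pointwise

theorem stmt_3 {G : Type*} [AddCommGroup G] [DecidableEq G]
    (A : Finset G) (hA : A.Nonempty) (t : ℝ)
    (ht : ((A - A).card : ℝ) ≤ t * A.card) (k : ℕ) (hk : 1 ≤ k) :
    ((k • A).card : ℝ) ≤ t ^ k * A.card := by
  have h := Finset.pluennecke_ruzsa_inequality_nsmul_sub hA A k
  have hA0 : (0 : ℝ) < A.card := by exact_mod_cast hA.card_pos
  have hq : ((k • A).card : ℝ) ≤ (((A - A).card : ℝ) / A.card) ^ k * A.card := by
    have := (NNRat.cast_le (K := ℝ)).2 h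
    push_cast at this
    exact this
  refine hq.trans ?_
  have htk : (((A - A).card : ℝ) / A.card) ≤ t := by
    rw [div_le_iff₀ hA0]; exact ht
  gcongr
end

section
/- H_k is submultiplicative: for all q₁, q₂ ≥ 2, H_k(q₁q₂) ≤ H_k(q₁)·H_k(q₂), where H_k(q) = min{|kA| : A ⊂ ℤ finite, |A - A| ≥ q}. -/
open Pointwise

/-- `Hfun k q` = min{|kA| : A ⊆ ℤ finite, |A - A| ≥ q}. -/
noncomputable def Hfun (k q : ℕ) : ℕ :=
  sInf {n | ∃ A : Finset ℤ, q ≤ (A - A).card ∧ (k • A).card = n}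

/-- The defining set of `Hfun` is nonempty. -/
lemma Hfun_set_nonempty (k q : ℕ) (hq : 1 ≤ q) :
    {n | ∃ A : Finset ℤ, q ≤ (A - A).card ∧ (k • A).card = n}.Nonempty := by
  refine ⟨(k • ((Finset.range q).image (Nat.cast : ℕ → ℤ))).card,
    (Finset.range q).image (Nat.cast : ℕ → ℤ), ?_, rfl⟩
  set A : Finset ℤ := (Finset.range q).image (Nat.cast : ℕ → ℤ) with hA
  have h0 : (0 : ℤ) ∈ A := by
    simp only [hA, Finset.mem_image, Finset.mem_range]
    exact ⟨0, by omega, rfl⟩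
  have hsub : A ⊆ A - A := fun a ha => by
    rw [Finset.mem_sub]; exact ⟨a, ha, 0, h0, sub_zero a⟩
  calc q = A.card := by
        rw [hA, Finset.card_image_of_injective _ (fun a b => by exact_mod_cast id),
          Finset.card_range]
    _ ≤ (A - A).card := Finset.card_le_card hsub

/-- scaling commutes with pointwise subtraction. -/
lemma image_mul_sub (m : ℤ) (s t : Finset ℤ) :
    s.image (fun x => m * x) - t.image (fun x => m * x) = (s - t).image (fun x => m * x) := by
  ext x
  simp only [Finset.mem_sub, Finset.mem_image]
  constructor
  · rintro ⟨a, ⟨u, hu, rfl⟩, b, ⟨v, hv, rfl⟩, rfl⟩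
    exact ⟨u - v, ⟨u, hu, v, hv, rfl⟩, mul_sub m u v⟩
  · rintro ⟨w, ⟨u, hu, v, hv, rfl⟩, rfl⟩
    exact ⟨m * u, ⟨u, hu, rfl⟩, m * v, ⟨v, hv, rfl⟩, (mul_sub m u v).symm⟩

/-- `k • (image of scaling)` commutes. -/
lemma nsmul_image_mul (k : ℕ) (m : ℤ) (B : Finset ℤ) :
    k • (B.image (fun t => m * t)) = (k • B).image (fun t => m * t) := by
  have hf : ∀ (s t : Finset ℤ),
      (s + t).image (fun x => m * x) = s.image (fun x => m * x) + t.image (fun x => m * x) := by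
    intro s t
    have := Finset.image_add (f := AddMonoidHom.mulLeft m) (s := s) (t := t)
    simpa using this
  induction k with
  | zero =>
      simp only [zero_nsmul]
      ext x
      simp only [Finset.mem_image, Finset.mem_zero]
      constructor
      · rintro rfl; exact ⟨0, rfl, mul_zero m⟩
      · rintro ⟨y, rfl, rfl⟩; simp
  | succ n ih =>
      rw [succ_nsmul, succ_nsmul, ih, hf]

theorem stmt_6 (k q₁ q₂ : ℕ) (hk : 1 ≤ k) (hq₁ : 2 ≤ q₁) (hq₂ : 2 ≤ q₂) :
    Hfun k (q₁ * q₂) ≤ Hfun k q₁ * Hfun k q₂ := by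
  obtain ⟨A₁, hA₁, hcard₁⟩ := Nat.sInf_mem (Hfun_set_nonempty k q₁ (by omega))
  obtain ⟨A₂, hA₂, hcard₂⟩ := Nat.sInf_mem (Hfun_set_nonempty k q₂ (by omega))
  set D : Finset ℤ := A₁ - A₁ with hD
  set E : Finset ℤ := A₂ - A₂ with hE
  have hDne : D.Nonempty := Finset.card_pos.mp (by omega)
  -- choose the scaling factor m larger than the diameter of D
  set m : ℤ := D.max' hDne - D.min' hDne + 1 with hm
  have hmpos : 0 < m := by
    have := D.min'_le _ (D.max'_mem hDne); omega
  have hdiam : ∀ d ∈ D, ∀ d' ∈ D, d - d' < m ∧ -m < d - d' := by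
    intro d hd d' hd'
    have h1 := D.le_max' d hd
    have h2 := D.min'_le d hd
    have h3 := D.le_max' d' hd'
    have h4 := D.min'_le d' hd'
    omega
  set B : Finset ℤ := A₂.image (fun t => m * t) with hB
  set A : Finset ℤ := A₁ + B with hA
  -- the difference set of A
  have hAA : A - A = D + E.image (fun t => m * t) := by
    rw [hA, ← sub_add_sub_comm, hB, image_mul_sub]
  -- lower bound on |A - A|
  have hinj : Set.InjOn (fun p : ℤ × ℤ => p.1 + m * p.2) ↑(D ×ˢ E) := by
    rintro ⟨d, e⟩ hde ⟨d', e'⟩ hde' h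
    simp only [Finset.coe_product, Set.mem_prod, Finset.mem_coe] at hde hde'
    simp only at h
    have he : e = e' := by
      by_contra hne
      have h1 : m * (e - e') = d' - d := by linear_combination h
      obtain ⟨c1, c2⟩ := hdiam d' hde'.1 d hde.1
      rcases lt_or_gt_of_ne hne with hlt | hgt
      · have : e' - e ≥ 1 := by omega
        nlinarith
      · have : e - e' ≥ 1 := by omega
        nlinarith
    subst he
    have : d = d' := by linarith
    simp [this]
  have hcardAA : q₁ * q₂ ≤ (A - A).card := by
    rw [hAA]
    have hsubset : (D ×ˢ E).image (fun p : ℤ × ℤ => p.1 + m * p.2)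
        ⊆ D + E.image (fun t => m * t) := by
      intro x hx
      simp only [Finset.mem_image, Finset.mem_product] at hx
      obtain ⟨⟨d, e⟩, ⟨hd, he⟩, rfl⟩ := hx
      exact Finset.add_mem_add hd (Finset.mem_image_of_mem _ he)
    calc q₁ * q₂ ≤ D.card * E.card := Nat.mul_le_mul hA₁ hA₂
      _ = ((D ×ˢ E).image (fun p : ℤ × ℤ => p.1 + m * p.2)).card := by
          rw [Finset.card_image_of_injOn hinj, Finset.card_product]
      _ ≤ (D + E.image (fun t => m * t)).card := Finset.card_le_card hsubset
  -- upper bound on |kA|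
  have hkA : (k • A).card ≤ Hfun k q₁ * Hfun k q₂ := by
    rw [hA, nsmul_add]
    calc (k • A₁ + k • B).card ≤ (k • A₁).card * (k • B).card := Finset.card_add_le
      _ = (k • A₁).card * (k • A₂).card := by
          rw [hB, nsmul_image_mul,
            Finset.card_image_of_injective _ (mul_right_injective₀ (by omega : m ≠ 0))]
      _ = Hfun k q₁ * Hfun k q₂ := by unfold Hfun; rw [hcard₁, hcard₂]
  exact le_trans (Nat.sInf_le ⟨A, hcardAA, rfl⟩) hkA
end

section
/- G_k is submultiplicative: for all q₁, q₂ ≥ 2, G_k(q₁q₂) ≤ G_k(q₁)·G_k(q₂), where G_k(q) is the minimum of |kA| over finite sets A of integers whose difference set A - A contains q consecutive integers. -/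
open Pointwise

/-- `Gfun k q` = min{|kA| : A ⊆ ℤ finite, A - A contains q consecutive integers}. -/
noncomputable def Gfun (k q : ℕ) : ℕ :=
  sInf {n | ∃ A : Finset ℤ, ∃ a : ℤ, Finset.Icc (a + 1) (a + q) ⊆ A - A ∧ (k • A).card = n}

private def dil (c : ℤ) (s : Finset ℤ) : Finset ℤ := s.image (fun x => c * x)

private lemma mem_dil {c x : ℤ} {s : Finset ℤ} (hx : x ∈ s) : c * x ∈ dil c s :=
  Finset.mem_image_of_mem _ hx

private lemma dil_add (c : ℤ) (X Y : Finset ℤ) : dil c (X + Y) = dil c X + dil c Y := by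
  ext x
  simp only [dil, Finset.mem_image, Finset.mem_add]
  constructor
  · rintro ⟨y, ⟨u, hu, v, hv, rfl⟩, rfl⟩
    exact ⟨c * u, ⟨u, hu, rfl⟩, c * v, ⟨v, hv, rfl⟩, (mul_add c u v).symm⟩
  · rintro ⟨y, ⟨u, hu, rfl⟩, z, ⟨v, hv, rfl⟩, rfl⟩
    exact ⟨u + v, ⟨u, hu, v, hv, rfl⟩, mul_add c u v⟩

private lemma nsmul_dil (k : ℕ) (c : ℤ) (s : Finset ℤ) :
    k • (dil c s) = dil c (k • s) := by
  induction k with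
  | zero =>
    rw [zero_nsmul, zero_nsmul]
    ext x
    simp [dil, Finset.mem_zero, Finset.mem_image]
  | succ n ih =>
    rw [succ_nsmul, succ_nsmul, dil_add, ih]

private lemma gset_nonempty (k q : ℕ) :
    {n | ∃ A : Finset ℤ, ∃ a : ℤ, Finset.Icc (a + 1) (a + q) ⊆ A - A ∧ (k • A).card = n}.Nonempty := by
  refine ⟨(k • (Finset.Icc (0:ℤ) q)).card, Finset.Icc (0:ℤ) q, 0, ?_, rfl⟩
  intro x hx
  simp only [Finset.mem_Icc, zero_add] at hx
  have h0 : (0:ℤ) ∈ Finset.Icc (0:ℤ) q := by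
    simp only [Finset.mem_Icc]
    exact ⟨le_refl 0, by positivity⟩
  have hxm : x ∈ Finset.Icc (0:ℤ) q := by
    simp only [Finset.mem_Icc]; omega
  have := Finset.sub_mem_sub hxm h0
  simpa using this

theorem stmt_7 (k q₁ q₂ : ℕ) (hk : 1 ≤ k) (hq₁ : 2 ≤ q₁) (hq₂ : 2 ≤ q₂) :
    Gfun k (q₁ * q₂) ≤ Gfun k q₁ * Gfun k q₂ := by
  obtain ⟨A₁, a₁, hsub₁, hcard₁⟩ := Nat.sInf_mem (gset_nonempty k q₁)
  obtain ⟨A₂, a₂, hsub₂, hcard₂⟩ := Nat.sInf_mem (gset_nonempty k q₂)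
  set A : Finset ℤ := A₁ + dil (q₁:ℤ) A₂ with hA
  have hq₁pos : (0:ℤ) < (q₁:ℤ) := by exact_mod_cast Nat.lt_of_lt_of_le Nat.zero_lt_two hq₁
  -- the subset condition for A
  have hsub : Finset.Icc (a₁ + (q₁:ℤ) * a₂ + (q₁:ℤ) + 1)
      (a₁ + (q₁:ℤ) * a₂ + (q₁:ℤ) + (q₁ * q₂ : ℕ)) ⊆ A - A := by
    intro x hx
    simp only [Finset.mem_Icc] at hx
    push_cast at hx
    set m : ℤ := x - a₁ - (q₁:ℤ) * a₂ with hm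
    have hm1 : (q₁:ℤ) + 1 ≤ m := by omega
    have hm2 : m ≤ (q₁:ℤ) + (q₁:ℤ) * (q₂:ℤ) := by omega
    set v : ℤ := (m - 1) / (q₁:ℤ) with hv
    set u : ℤ := (m - 1) % (q₁:ℤ) + 1 with hu
    have hdm : (q₁:ℤ) * v + (m - 1) % (q₁:ℤ) = m - 1 := Int.mul_ediv_add_emod (m-1) q₁
    have hu1 : 1 ≤ u := by
      have := Int.emod_nonneg (m - 1) (ne_of_gt hq₁pos)
      omega
    have hu2 : u ≤ (q₁:ℤ) := by
      have := Int.emod_lt_of_pos (m - 1) hq₁pos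
      omega
    have hv1 : 1 ≤ v := by
      rw [hv, Int.le_ediv_iff_mul_le hq₁pos]
      omega
    have hv2 : v ≤ (q₂:ℤ) := by
      have : v < (q₂:ℤ) + 1 := by
        rw [hv, Int.ediv_lt_iff_lt_mul hq₁pos]
        nlinarith
      omega
    have hmu : m = u + (q₁:ℤ) * v := by omega
    have hx_eq : x = (a₁ + u) + (q₁:ℤ) * (a₂ + v) := by
      linear_combination hmu - hm
    have h1 : a₁ + u ∈ A₁ - A₁ := by
      apply hsub₁
      simp only [Finset.mem_Icc]
      omega
    have h2 : a₂ + v ∈ A₂ - A₂ := by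
      apply hsub₂
      simp only [Finset.mem_Icc]
      omega
    rw [Finset.mem_sub] at h1 h2
    obtain ⟨p, hp, p', hp', hpp⟩ := h1
    obtain ⟨r, hr, r', hr', hrr⟩ := h2
    have hmem1 : p + (q₁:ℤ) * r ∈ A := Finset.add_mem_add hp (mem_dil hr)
    have hmem2 : p' + (q₁:ℤ) * r' ∈ A := Finset.add_mem_add hp' (mem_dil hr')
    have hdiff : (p + (q₁:ℤ) * r) - (p' + (q₁:ℤ) * r') = x := by
      rw [hx_eq, ← hpp, ← hrr]
      ring
    rw [← hdiff]
    exact Finset.sub_mem_sub hmem1 hmem2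
  -- the cardinality bound
  have hcard : (k • A).card ≤ (k • A₁).card * (k • A₂).card := by
    have e1 : k • A = k • A₁ + dil (q₁:ℤ) (k • A₂) := by
      rw [hA, nsmul_add, nsmul_dil]
    rw [e1]
    calc (k • A₁ + dil (q₁:ℤ) (k • A₂)).card
        ≤ (k • A₁).card * (dil (q₁:ℤ) (k • A₂)).card := Finset.card_add_le
      _ ≤ (k • A₁).card * (k • A₂).card :=
          Nat.mul_le_mul_left _ Finset.card_image_le
  have hle : Gfun k (q₁ * q₂) ≤ (k • A).card :=
    Nat.sInf_le ⟨A, a₁ + (q₁:ℤ) * a₂ + (q₁:ℤ), hsub, rfl⟩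
  calc Gfun k (q₁ * q₂) ≤ (k • A).card := hle
    _ ≤ (k • A₁).card * (k • A₂).card := hcard
    _ = Gfun k q₁ * Gfun k q₂ := by rw [hcard₁, hcard₂]; rfl
end

section
/- G_k(2q+1) ≤ 2k·F_k(q): if A ⊆ ℤ/qℤ with A - A = ℤ/qℤ, then the lifted set A' = {n : -q < n ≤ q, n mod q ∈ A} satisfies: A' - A' contains 2q+1 consecutive integers and |kA'| ≤ 2k·|kA|. -/
/-!
Every residue class has two representatives in `(-q, q]`, one in `(-q, 0]` and one in `(0, q]`.
Given `m ∈ [-q, q]`, write `m ≡ x - y` with `x, y ∈ A` and lift `y` into whichever of these two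
halves keeps `y + m` inside `(-q, q]`; this shows `[-q, q] ⊆ A' - A'`.
For the size bound, `kA'` lies in `[k - kq, kq]`, an interval covered by `2k` blocks of `q`
consecutive integers, and on each block reduction mod `q` is an injection into `kA`.
-/

open Finset Pointwise

theorem Finset.nsmul_subset_Icc {α : Type*} [AddCommMonoid α] [Preorder α] [AddLeftMono α]
    [AddRightMono α] [LocallyFiniteOrder α] [DecidableEq α] {s : Finset α} {a b : α}
    (h : s ⊆ Icc a b) : ∀ n : ℕ, n • s ⊆ Icc (n • a) (n • b)
  | 0 => by simp
  | n + 1 => by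
    rw [succ_nsmul, succ_nsmul, succ_nsmul]
    exact (add_subset_add (Finset.nsmul_subset_Icc h n) h).trans (Icc_add_Icc_subset _ _ _ _)

theorem ZMod.exists_intCast_eq_of_Ioc {q : ℕ} [NeZero q] (c : ℤ) (y : ZMod q) :
    ∃ b : ℤ, c < b ∧ b ≤ c + q ∧ (b : ZMod q) = y := by
  have hq : (0 : ℤ) < q := by exact_mod_cast Nat.pos_of_ne_zero (NeZero.ne q)
  refine ⟨c + 1 + ((y.val : ℤ) - (c + 1)) % q, ?_, ?_, ?_⟩
  · linarith [Int.emod_nonneg ((y.val : ℤ) - (c + 1)) hq.ne']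
  · linarith [Int.emod_lt_of_pos ((y.val : ℤ) - (c + 1)) hq]
  · push_cast
    simp

theorem card_le_mul_card_image_intCast {q : ℕ} [NeZero q] {s : Finset ℤ} {a : ℤ} {m : ℕ}
    (hs : s ⊆ Ico a (a + m * q)) : #s ≤ m * #(s.image (Int.cast : ℤ → ZMod q)) := by
  have hq : (0 : ℤ) < q := by exact_mod_cast Nat.pos_of_ne_zero (NeZero.ne q)
  let f : ℤ → ℤ × ZMod q := fun n => ((n - a) / q, (n : ZMod q))
  have hmaps : Set.MapsTo f s (Ico 0 (m : ℤ) ×ˢ s.image (Int.cast : ℤ → ZMod q) : Finset _) := by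
    intro n hn
    have := mem_Ico.mp (hs hn)
    simp only [f, mem_coe, mem_product, mem_Ico, mem_image]
    refine ⟨⟨Int.ediv_nonneg (by omega) hq.le, ?_⟩, n, hn, rfl⟩
    rw [Int.ediv_lt_iff_lt_mul hq]
    linarith
  -- `n` is recovered from its block index `(n - a) / q` and its residue `(n - a) % q`.
  have hinj : Set.InjOn f s := by
    intro n _ n' _ hf
    obtain ⟨hdiv, hcast⟩ := Prod.mk.inj hf
    have hmod : (n - a) % q = (n' - a) % q := by
      rw [← ZMod.intCast_eq_intCast_iff']
      push_cast
      rw [hcast]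
    have h := Int.mul_ediv_add_emod (n - a) q
    rw [hdiv, hmod] at h
    linarith [Int.mul_ediv_add_emod (n' - a) q]
  simpa using card_le_card_of_injOn f hmaps hinj

noncomputable def liftIoc (q : ℕ) (A : Finset (ZMod q)) : Finset ℤ :=
  (Ioc (-(q : ℤ)) q).filter fun n : ℤ => (n : ZMod q) ∈ A

variable {q : ℕ}

theorem mem_liftIoc {A : Finset (ZMod q)} {n : ℤ} :
    n ∈ liftIoc q A ↔ -(q : ℤ) < n ∧ n ≤ q ∧ (n : ZMod q) ∈ A := by
  simp [liftIoc, and_assoc]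

theorem Icc_subset_liftIoc_sub_liftIoc [NeZero q] {A : Finset (ZMod q)} (hA : A - A = univ) :
    Icc (-(q : ℤ)) q ⊆ liftIoc q A - liftIoc q A := by
  intro m hm
  rw [mem_Icc] at hm
  obtain ⟨x, hx, y, hy, hxy⟩ := mem_sub.mp (hA ▸ mem_univ (m : ZMod q))
  have of_lift : ∀ b : ℤ, -(q : ℤ) < b → b ≤ q → -(q : ℤ) < b + m → b + m ≤ q →
      (b : ZMod q) = y → m ∈ liftIoc q A - liftIoc q A := by
    intro b hb₁ hb₂ hbm₁ hbm₂ hby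
    have hbmx : ((b + m : ℤ) : ZMod q) = x := by
      push_cast
      rw [hby, ← hxy]
      ring
    exact mem_sub.mpr ⟨b + m, mem_liftIoc.mpr ⟨hbm₁, hbm₂, hbmx ▸ hx⟩,
      b, mem_liftIoc.mpr ⟨hb₁, hb₂, hby ▸ hy⟩, by ring⟩
  rcases le_total 0 m with hm₀ | hm₀
  · obtain ⟨b, hb₁, hb₂, hby⟩ := ZMod.exists_intCast_eq_of_Ioc (-(q : ℤ)) y
    exact of_lift b hb₁ (by omega) (by omega) (by omega) hby
  · obtain ⟨b, hb₁, hb₂, hby⟩ := ZMod.exists_intCast_eq_of_Ioc 0 y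
    exact of_lift b (by omega) (by omega) (by omega) (by omega) hby

theorem liftIoc_subset_Icc (A : Finset (ZMod q)) : liftIoc q A ⊆ Icc (1 - q : ℤ) q := by
  intro n hn
  have := mem_liftIoc.mp hn
  rw [mem_Icc]
  omega

theorem image_intCast_nsmul_liftIoc_subset (A : Finset (ZMod q)) (k : ℕ) :
    (k • liftIoc q A).image (Int.cast : ℤ → ZMod q) ⊆ k • A := by
  refine (image_nsmul (Int.castAddHom (ZMod q)) (liftIoc q A) k).trans_subset <|
    nsmul_subset_nsmul_left fun r hr => ?_
  obtain ⟨n, hn, rfl⟩ := mem_image.mp hr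
  exact (mem_liftIoc.mp hn).2.2

theorem card_nsmul_liftIoc_le [NeZero q] {k : ℕ} (hk : 1 ≤ k) (A : Finset (ZMod q)) :
    #(k • liftIoc q A) ≤ 2 * k * #(k • A) := by
  have hsub : k • liftIoc q A ⊆ Ico (k * (1 - q) : ℤ) (k * (1 - q) + (2 * k : ℕ) * q) := by
    refine (nsmul_subset_Icc (liftIoc_subset_Icc A) k).trans fun n hn => ?_
    rw [mem_Icc, nsmul_eq_mul, nsmul_eq_mul] at hn
    rw [mem_Ico]
    push_cast
    constructor <;> nlinarith
  calc #(k • liftIoc q A) ≤ 2 * k * #((k • liftIoc q A).image (Int.cast : ℤ → ZMod q)) :=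
        card_le_mul_card_image_intCast hsub
    _ ≤ 2 * k * #(k • A) := by gcongr; exact image_intCast_nsmul_liftIoc_subset A k

theorem stmt_11 (k q : ℕ) (hk : 1 ≤ k) [NeZero q] (A : Finset (ZMod q))
    (hA : A - A = Finset.univ)
    (A' : Finset ℤ)
    (hA' : A' = (Finset.Ioc (-(q : ℤ)) q).filter (fun n : ℤ => ((n : ZMod q) ∈ A))) :
    Finset.Icc (-(q : ℤ)) q ⊆ A' - A' ∧ (k • A').card ≤ 2 * k * (k • A).card := by
  subst hA'
  exact ⟨Icc_subset_liftIoc_sub_liftIoc hA, card_nsmul_liftIoc_le hk A⟩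
end

section
/- Quasi-additivity of π_t: for q ≥ 1, t ∈ ℝ, and π_t(n) = ⌊q·{tn}⌋ (where {x} is the fractional part), for all integers x, y there exists r ∈ {0, 1, -q, 1-q} such that π_t(x+y) = π_t(x) + π_t(y) + r. -/
theorem stmt_12 (q : ℕ) (hq : 1 ≤ q) (t : ℝ)
    (π : ℤ → ℤ) (hπ : ∀ n : ℤ, π n = ⌊(q : ℝ) * Int.fract (t * n)⌋) :
    ∀ x y : ℤ, ∃ r ∈ ({0, 1, -(q : ℤ), 1 - (q : ℤ)} : Set ℤ),
      π (x + y) = π x + π y + r := by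
  intro x y
  refine ⟨π (x + y) - π x - π y, ?_, by ring⟩
  rw [hπ, hπ, hπ]
  set u := t * (x : ℝ) with hu
  set v := t * (y : ℝ) with hv
  have hsum : t * ((x : ℤ) + (y : ℤ) : ℤ) = u + v := by push_cast; ring
  rw [hsum]
  -- e = carry of fractional parts
  set e : ℤ := ⌊Int.fract u + Int.fract v⌋ with he
  have hfr : Int.fract (u + v) = Int.fract u + Int.fract v - e := by
    have : Int.fract (u + v) = Int.fract (Int.fract u + Int.fract v) := by
      rw [Int.fract_eq_fract]
      exact ⟨⌊u⌋ + ⌊v⌋, by push_cast; unfold Int.fract; ring⟩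
    rw [this, Int.fract]
  have he01 : e = 0 ∨ e = 1 := by
    have h0 : (0:ℤ) ≤ e := Int.floor_nonneg.mpr
      (add_nonneg (Int.fract_nonneg u) (Int.fract_nonneg v))
    have h2 : e < 2 := by
      have := add_lt_add (Int.fract_lt_one u) (Int.fract_lt_one v)
      have : (e : ℝ) < 2 := lt_of_le_of_lt (Int.floor_le _) (by linarith)
      exact_mod_cast this
    omega
  set a : ℝ := (q : ℝ) * Int.fract u with ha
  set b : ℝ := (q : ℝ) * Int.fract v with hb
  have key : (q : ℝ) * Int.fract (u + v) = a + b + (-(q:ℤ) * e : ℤ) := by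
    rw [hfr]; push_cast; ring
  have h1 : ⌊(q : ℝ) * Int.fract (u + v)⌋ = ⌊a + b⌋ - q * e := by
    rw [key, Int.floor_add_intCast]; ring
  have hlow : ⌊a⌋ + ⌊b⌋ ≤ ⌊a + b⌋ := by
    apply Int.le_floor.mpr
    push_cast
    exact add_le_add (Int.floor_le a) (Int.floor_le b)
  have hup : ⌊a + b⌋ - 1 ≤ ⌊a⌋ + ⌊b⌋ := Int.le_floor_add_floor a b
  rw [h1]
  simp only [Set.mem_insert_iff, Set.mem_singleton_iff]
  rcases he01 with h | h <;> rw [h] <;> [skip; rw [mul_one]] <;> omega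
end

section
/- Let S be a set of q integers. Then there exists t ∈ (0,1) such that |π_t(S)| > q/3, where π_t(n) = ⌊q·{tn}⌋. -/
/-!
Average the number of colliding pairs of `π_t = bucket q t` over the rational points `t = k / N`,
`0 < k < N`, where `N` is a prime exceeding every `|m - n|` with `m, n ∈ S`. For `m ≠ n`, a
collision at `k` makes `k (m - n)` congruent mod `N` to a nonzero integer `c` with `q |c| < N`;
since `k ↦ k (m - n)` is injective mod `N`, at most `2 (N - 1) / q` values of `k` collide. So on
average there are at most `q + 2 (q - 1) < 3 q` colliding pairs, and Cauchy–Schwarz over the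
fibres of `π_t`, `q² ≤ |π_t(S)| · #collisions`, gives `|π_t(S)| > q / 3` for a good `t`.
-/

open Finset

section Collisions

variable {ι α β : Type*} [DecidableEq β]

def collisions (f : α → β) (S : Finset α) : Finset (α × α) :=
  {p ∈ S ×ˢ S | f p.1 = f p.2}

lemma card_collisions_eq_sum_sq (f : α → β) (S : Finset α) :
    #(collisions f S) = ∑ v ∈ S.image f, #{x ∈ S | f x = v} ^ 2 := by
  rw [collisions, card_eq_sum_card_fiberwise (f := fun p => f p.1) (t := S.image f)
    fun p hp => mem_image_of_mem f (mem_product.mp (mem_filter.mp hp).1).1]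
  refine sum_congr rfl fun v _ => ?_
  rw [sq, ← card_product]
  congr 1
  ext ⟨x, y⟩
  simp only [mem_filter, mem_product]
  constructor
  · rintro ⟨⟨⟨hx, hy⟩, hxy⟩, rfl⟩
    exact ⟨⟨hx, rfl⟩, hy, hxy.symm⟩
  · rintro ⟨⟨hx, rfl⟩, hy, hxy⟩
    exact ⟨⟨⟨hx, hy⟩, hxy.symm⟩, rfl⟩

theorem sq_card_le_card_image_mul_card_collisions (f : α → β) (S : Finset α) :
    #S ^ 2 ≤ #(S.image f) * #(collisions f S) := by
  rw [card_collisions_eq_sum_sq, card_eq_sum_card_image f S]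
  exact sq_sum_le_card_mul_sum_sq

lemma sum_card_collisions_le [DecidableEq α] (K : Finset ι) (π : ι → α → β) (S : Finset α)
    {B : ℕ}
    (hB : ∀ m ∈ S, ∀ n ∈ S, m ≠ n → #{k ∈ K | π k m = π k n} ≤ B) :
    ∑ k ∈ K, #(collisions (π k) S) ≤ #S * #K + (#S * #S - #S) * B := by
  have hswap :
      ∑ k ∈ K, #(collisions (π k) S) = ∑ p ∈ S ×ˢ S, #{k ∈ K | π k p.1 = π k p.2} := by
    simp only [collisions, card_filter]
    exact sum_comm
  have hdiag : ∑ p ∈ S.diag, #{k ∈ K | π k p.1 = π k p.2} ≤ #S * #K :=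
    (sum_le_card_nsmul S.diag _ _ fun p _ => card_filter_le K _).trans_eq
      (by rw [diag_card, smul_eq_mul])
  have hoffDiag : ∑ p ∈ S.offDiag, #{k ∈ K | π k p.1 = π k p.2} ≤ (#S * #S - #S) * B :=
    (sum_le_card_nsmul S.offDiag _ B fun p hp => by
      obtain ⟨hm, hn, hmn⟩ := mem_offDiag.mp hp
      exact hB _ hm _ hn hmn).trans_eq (by rw [offDiag_card, smul_eq_mul])
  rw [hswap, ← diag_union_offDiag, sum_union (disjoint_diag_offDiag S)]
  exact add_le_add hdiag hoffDiag

end Collisions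

lemma Int.eq_zero_or_eq_zero_of_prime_dvd_mul {p : ℕ} (hp : p.Prime) {a b : ℤ}
    (ha : |a| < p) (hb : |b| < p) (h : (p : ℤ) ∣ a * b) : a = 0 ∨ b = 0 :=
  ((Nat.prime_iff_prime_int.mp hp).dvd_or_dvd h).imp
    (Int.eq_zero_of_abs_lt_dvd · ha) (Int.eq_zero_of_abs_lt_dvd · hb)

lemma mul_abs_emod_sub_emod_lt_of_floor_eq {q N : ℕ} (hN : 0 < N) {x y : ℤ}
    (h : ⌊(q : ℝ) * Int.fract ((x : ℝ) / N)⌋ = ⌊(q : ℝ) * Int.fract ((y : ℝ) / N)⌋) :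
    q * |x % N - y % N| < N := by
  have hN' : (0 : ℝ) < N := by exact_mod_cast hN
  have h1 := Int.abs_sub_lt_one_of_floor_eq_floor h
  rw [Int.fract_div_intCast_eq_div_intCast_mod, Int.fract_div_intCast_eq_div_intCast_mod,
    ← mul_sub, ← sub_div, abs_mul, abs_div, Nat.abs_cast, abs_of_pos hN',
    ← mul_div_assoc, div_lt_one hN'] at h1
  exact_mod_cast h1

noncomputable def bucket (q : ℕ) (t : ℝ) (n : ℤ) : ℤ :=
  ⌊(q : ℝ) * Int.fract (t * n)⌋

noncomputable def smallNonzero (q N : ℕ) : Finset ℤ :=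
  (Icc (-(((N - 1) / q : ℕ) : ℤ)) ((N - 1) / q : ℕ)).erase 0

lemma card_smallNonzero (q N : ℕ) : #(smallNonzero q N) = 2 * ((N - 1) / q) := by
  rw [smallNonzero]
  generalize (N - 1) / q = B
  rw [card_erase_of_mem (mem_Icc.mpr ⟨by omega, by omega⟩), Int.card_Icc]
  omega

lemma mem_smallNonzero {q N : ℕ} (hq : 0 < q) (hN : 0 < N) {c : ℤ} :
    c ∈ smallNonzero q N ↔ c ≠ 0 ∧ q * |c| < N := by
  have hB : (((N - 1) / q : ℕ) : ℤ) = ((N : ℤ) - 1) / q := by simp [Nat.cast_sub hN]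
  rw [smallNonzero, mem_erase, mem_Icc, ← abs_le, hB,
    Int.le_ediv_iff_mul_le (by exact_mod_cast hq), mul_comm]
  exact and_congr_right fun _ => Int.le_sub_one_iff

theorem card_filter_bucket_eq_le {q N : ℕ} (hq : 0 < q) (hN : N.Prime) {m n : ℤ} (hmn : m ≠ n)
    (hlt : |m - n| < N) :
    #((Ioo 0 N).filter fun k : ℕ => bucket q (k / N) m = bucket q (k / N) n) ≤
      2 * ((N - 1) / q) := by
  set K := (Ioo 0 N).filter fun k : ℕ => bucket q (k / N) m = bucket q (k / N) n
  set c : ℕ → ℤ := fun k => k * m % N - k * n % N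
  have hc_modEq (k : ℕ) : c k ≡ k * (m - n) [ZMOD N] := by
    rw [mul_sub]
    exact (Int.mod_modEq _ _).sub (Int.mod_modEq _ _)
  have hmaps : ∀ k ∈ K, c k ∈ smallNonzero q N := by
    intro k hk
    obtain ⟨hk, hcollide⟩ := mem_filter.mp hk
    obtain ⟨hk0, hkN⟩ := mem_Ioo.mp hk
    refine (mem_smallNonzero hq hN.pos).mpr ⟨fun hc0 => ?_, ?_⟩
    · have hdvd : (N : ℤ) ∣ k * (m - n) := by
        simpa [hc0] using (hc_modEq k).dvd.neg_right
      have habs : |(k : ℤ)| < N := by rw [Nat.abs_cast]; exact_mod_cast hkN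
      rcases Int.eq_zero_or_eq_zero_of_prime_dvd_mul hN habs hlt hdvd with h | h
      · omega
      · exact hmn (sub_eq_zero.mp h)
    · refine mul_abs_emod_sub_emod_lt_of_floor_eq hN.pos ?_
      simpa [bucket, div_mul_eq_mul_div] using hcollide
  have hinj : Set.InjOn c K := by
    intro k₁ hk₁ k₂ hk₂ hc
    have hk₁ := mem_Ioo.mp (mem_filter.mp hk₁).1
    have hk₂ := mem_Ioo.mp (mem_filter.mp hk₂).1
    have hdvd : (N : ℤ) ∣ ((k₂ : ℤ) - k₁) * (m - n) := by
      rw [sub_mul]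
      exact ((hc_modEq k₁).symm.trans (hc ▸ hc_modEq k₂)).dvd
    have hdiff : |(k₂ : ℤ) - k₁| < N := by rw [abs_lt]; constructor <;> omega
    rcases Int.eq_zero_or_eq_zero_of_prime_dvd_mul hN hdiff hlt hdvd with h | h
    · omega
    · exact (hmn (sub_eq_zero.mp h)).elim
  exact card_smallNonzero q N ▸ card_le_card_of_injOn c hmaps hinj

theorem sum_card_collisions_bucket_lt {q N : ℕ} (hq : 1 ≤ q) (hN : N.Prime) {S : Finset ℤ}
    (hS : #S = q) (hlt : ∀ m ∈ S, ∀ n ∈ S, |m - n| < N) :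
    ∑ k ∈ Ioo 0 N, #(collisions (bucket q ((k : ℕ) / N : ℝ)) S) <
      ∑ _k ∈ Ioo 0 N, 3 * q := by
  refine (sum_card_collisions_le _ _ S fun m hm n hn hmn =>
    card_filter_bucket_eq_le hq hN hmn (hlt m hm n hn)).trans_lt ?_
  have hoffDiag : (q * q - q) * (2 * ((N - 1) / q)) ≤ 2 * (q - 1) * (N - 1) :=
    calc (q * q - q) * (2 * ((N - 1) / q)) = 2 * (q - 1) * (q * ((N - 1) / q)) := by
          rw [← Nat.mul_sub_one]; ring
      _ ≤ 2 * (q - 1) * (N - 1) := by gcongr; exact Nat.mul_div_le (N - 1) q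
  have hN1 : 1 ≤ N - 1 := Nat.le_sub_one_of_lt hN.two_le
  rw [hS, sum_const, Nat.card_Ioo, Nat.sub_zero, smul_eq_mul]
  calc q * (N - 1) + (q * q - q) * (2 * ((N - 1) / q))
      ≤ q * (N - 1) + 2 * (q - 1) * (N - 1) := by gcongr
    _ < (N - 1) * (3 * q) := by zify [hq] at hN1 ⊢; nlinarith

lemma exists_prime_abs_sub_lt (S : Finset ℤ) :
    ∃ N : ℕ, N.Prime ∧ ∀ m ∈ S, ∀ n ∈ S, |m - n| < N := by
  obtain ⟨N, hSN, hN⟩ := Nat.exists_infinite_primes (2 * S.sup Int.natAbs + 1)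
  refine ⟨N, hN, fun m hm n hn => ?_⟩
  have := le_sup (f := Int.natAbs) hm
  have := le_sup (f := Int.natAbs) hn
  have := Int.natAbs_sub_le m n
  rw [Int.abs_eq_natAbs]
  omega

theorem stmt_13 (q : ℕ) (hq : 1 ≤ q) (S : Finset ℤ) (hS : S.card = q) :
    ∃ t ∈ Set.Ioo (0 : ℝ) 1,
      (q : ℝ) / 3 < ((S.image (fun n : ℤ => ⌊(q : ℝ) * Int.fract (t * n)⌋)).card : ℝ) := by
  obtain ⟨N, hN, hlt⟩ := exists_prime_abs_sub_lt S
  obtain ⟨k, hk, hZ⟩ := exists_lt_of_sum_lt (sum_card_collisions_bucket_lt hq hN hS hlt)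
  obtain ⟨hk0, hkN⟩ := mem_Ioo.mp hk
  have hN0 : (0 : ℝ) < N := by exact_mod_cast hN.pos
  refine ⟨k / N, ⟨div_pos (by exact_mod_cast hk0) hN0,
    (div_lt_one hN0).mpr (by exact_mod_cast hkN)⟩, ?_⟩
  have hcs := sq_card_le_card_image_mul_card_collisions (bucket q (k / N)) S
  rw [hS] at hcs
  have : q < #(S.image (bucket q (k / N))) * 3 := by nlinarith
  rw [div_lt_iff₀ three_pos]
  exact_mod_cast this
end

section
/- If t is chosen uniformly at random in [0,1) and m ≠ n are integers, then the probability that π_t(m) = π_t(n) is at most 2/q, where π_t(n) = ⌊q·{tn}⌋. -/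
open MeasureTheory

theorem stmt_14 (q : ℕ) (hq : 1 ≤ q) (m n : ℤ) (hmn : m ≠ n) :
    volume {t : ℝ | t ∈ Set.Ico (0 : ℝ) 1 ∧
        ⌊(q : ℝ) * Int.fract (t * m)⌋ = ⌊(q : ℝ) * Int.fract (t * n)⌋} ≤
      ENNReal.ofReal (2 / q) := by
  set a : ℕ := (m - n).natAbs with ha
  have ha0 : 0 < a := Int.natAbs_pos.mpr (sub_ne_zero.mpr hmn)
  have hq0 : (0:ℝ) < q := by exact_mod_cast hq
  have haR : (0:ℝ) < a := by exact_mod_cast ha0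
  set ε : ℝ := 1 / (q * a) with hε
  have hε0 : 0 < ε := by positivity
  have hsub : {t : ℝ | t ∈ Set.Ico (0 : ℝ) 1 ∧
        ⌊(q : ℝ) * Int.fract (t * m)⌋ = ⌊(q : ℝ) * Int.fract (t * n)⌋} ⊆
      ⋃ j ∈ Finset.range a,
        (Set.Ico ((j:ℝ)/a) ((j:ℝ)/a + ε) ∪
          Set.Ioo (((j:ℝ)+1)/a - ε) (((j:ℝ)+1)/a)) := by
    rintro t ⟨⟨ht0, ht1⟩, hfl⟩
    -- |q fract(tm) - q fract(tn)| < 1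
    have h1 : |(q:ℝ) * Int.fract (t*m) - q * Int.fract (t*n)| < 1 := by
      have hA := Int.floor_le ((q:ℝ) * Int.fract (t*m))
      have hB := Int.lt_floor_add_one ((q:ℝ) * Int.fract (t*m))
      have hC := Int.floor_le ((q:ℝ) * Int.fract (t*n))
      have hD := Int.lt_floor_add_one ((q:ℝ) * Int.fract (t*n))
      rw [hfl] at hA hB
      rw [abs_sub_lt_iff]
      constructor <;> linarith
    -- rewrite as |q * (t*(m-n) - j')| < 1 with j' = ⌊tm⌋ - ⌊tn⌋
    set j' : ℤ := ⌊t*(m:ℝ)⌋ - ⌊t*(n:ℝ)⌋ with hj'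
    have h2 : |t*((m:ℝ)-n) - (j':ℝ)| < 1/q := by
      have heq : (q:ℝ) * Int.fract (t*m) - q * Int.fract (t*n)
          = q * (t*((m:ℝ)-n) - (j':ℝ)) := by
        simp only [Int.fract, hj']
        push_cast
        ring
      rw [heq, abs_mul, abs_of_pos hq0] at h1
      rw [lt_div_iff₀ hq0]
      linarith [h1]
    -- pass to a = |m - n|
    have haabs : (a:ℝ) = |((m:ℝ) - n)| := by
      rw [ha]
      push_cast [Nat.cast_natAbs]
      norm_num
    have h3 : ∃ k : ℤ, |t*(a:ℝ) - (k:ℝ)| < 1/q := by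
      rcases le_or_gt 0 ((m:ℝ) - n) with hs | hs
      · exact ⟨j', by rwa [haabs, abs_of_nonneg hs]⟩
      · refine ⟨-j', ?_⟩
        rw [haabs, abs_of_neg hs]
        have : t * -((m:ℝ) - n) - ((-j' : ℤ):ℝ) = -(t*((m:ℝ)-n) - (j':ℝ)) := by
          push_cast; ring
        rw [this, abs_neg]
        exact h2
    obtain ⟨k, hk⟩ := h3
    -- j = ⌊t*a⌋
    have hta0 : 0 ≤ t * (a:ℝ) := mul_nonneg ht0 haR.le
    have hta1 : t * (a:ℝ) < a := by
      nlinarith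
    set j : ℤ := ⌊t * (a:ℝ)⌋ with hj
    have hj0 : 0 ≤ j := Int.floor_nonneg.mpr hta0
    have hjle : (j:ℝ) ≤ t * a := Int.floor_le _
    have hjlt : t * a < (j:ℝ) + 1 := Int.lt_floor_add_one _
    have hja : j < a := by
      have : (j:ℝ) < (a:ℝ) := lt_of_le_of_lt hjle hta1
      exact_mod_cast this
    have h1q : (1:ℝ)/q ≤ 1 := by
      rw [div_le_one hq0]; exact_mod_cast hq
    have habs := abs_lt.mp hk
    -- k = j or k = j + 1
    have hkjj : k = j ∨ k = j + 1 := by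
      have hk1 : (j:ℝ) - 1 < k := by linarith
      have hk2 : (k:ℝ) < (j:ℝ) + 2 := by linarith
      have hk1' : j - 1 < k := by exact_mod_cast hk1
      have hk2' : k < j + 2 := by exact_mod_cast hk2
      omega
    refine Set.mem_biUnion (Finset.mem_range.mpr (show j.toNat < a by omega)) ?_
    have hcast : ((j.toNat : ℕ) : ℝ) = (j:ℝ) := by
      exact_mod_cast Int.toNat_of_nonneg hj0
    rcases hkjj with hkj | hkj
    · left
      subst hkj
      constructor
      · rw [hcast, div_le_iff₀ haR]; linarith
      · rw [hcast]
        have hlt : t * a < (j:ℝ) + 1/q := by linarith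
        have heq : (j:ℝ)/a + ε = ((j:ℝ) + 1/q)/a := by
          rw [hε]; field_simp
        rw [heq, lt_div_iff₀ haR]
        linarith
    · right
      subst hkj
      constructor
      · rw [hcast]
        have hgt : (j:ℝ) + 1 - 1/q < t * a := by
          push_cast at habs; linarith
        have heq : ((j:ℝ) + 1)/a - ε = ((j:ℝ) + 1 - 1/q)/a := by
          rw [hε]; field_simp
        rw [heq, div_lt_iff₀ haR]
        linarith
      · rw [hcast, lt_div_iff₀ haR]
        linarith
  calc volume {t : ℝ | t ∈ Set.Ico (0 : ℝ) 1 ∧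
        ⌊(q : ℝ) * Int.fract (t * m)⌋ = ⌊(q : ℝ) * Int.fract (t * n)⌋}
      ≤ volume (⋃ j ∈ Finset.range a,
        (Set.Ico ((j:ℝ)/a) ((j:ℝ)/a + ε) ∪
          Set.Ioo (((j:ℝ)+1)/a - ε) (((j:ℝ)+1)/a))) := measure_mono hsub
    _ ≤ ∑ j ∈ Finset.range a, volume
        (Set.Ico ((j:ℝ)/a) ((j:ℝ)/a + ε) ∪
          Set.Ioo (((j:ℝ)+1)/a - ε) (((j:ℝ)+1)/a)) :=
        measure_biUnion_finset_le _ _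
    _ ≤ ∑ j ∈ Finset.range a, ENNReal.ofReal (2*ε) := by
        refine Finset.sum_le_sum fun j _ => ?_
        refine (measure_union_le _ _).trans ?_
        rw [Real.volume_Ico, Real.volume_Ioo]
        have e1 : (j:ℝ)/a + ε - (j:ℝ)/a = ε := by ring
        have e2 : ((j:ℝ)+1)/a - (((j:ℝ)+1)/a - ε) = ε := by ring
        rw [e1, e2, ← ENNReal.ofReal_add hε0.le hε0.le]
        apply le_of_eq
        congr 1
        ring
    _ = ENNReal.ofReal (2/q) := by
        rw [Finset.sum_const, Finset.card_range, nsmul_eq_mul,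
          ← ENNReal.ofReal_natCast a, ← ENNReal.ofReal_mul haR.le]
        congr 1
        rw [hε]
        field_simp
end

section
/- The sequence (|kA|^{1/k})_{k≥1} is non-increasing: for every finite nonempty set A in a commutative group and every k ≥ 1, |(k+1)A|^k ≤ |kA|^{k+1}. -/
open Finset Pointwise
open scoped ENNReal

/-!
For every `s ∈ (k + 1) • A` pick the lexicographically least `(k + 1)`-tuple of elements of `A`
summing to `s`, and let `R` be the set of these tuples, so `#R = #((k + 1) • A)`. If two tuples of
`R` have the same sum outside the coordinate `j`, exchanging their `j`-th entries produces two
further representations, and lexicographic minimality forces the tuples to agree outside `j`.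
Hence forgetting the coordinate `j` maps `R` injectively into `k • A`, and the discrete
Loomis–Whitney inequality `#R ^ k ≤ ∏ j, #(projection of R forgetting j)` gives the claim.

Loomis–Whitney is proved by induction on the set of coordinates: slice `R` along one coordinate,
bound each slice by the induction hypothesis, and recombine the slices with Hölder's inequality.
-/

open MeasureTheory in
theorem ENNReal.sum_prod_rpow_le_prod_sum_rpow {ι β : Type*} (s : Finset β) (t : Finset ι)
    (f : ι → β → ℝ≥0∞) {p : ι → ℝ} (hp : ∑ i ∈ t, p i = 1) (hp₀ : ∀ i ∈ t, 0 ≤ p i) :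
    ∑ b ∈ s, ∏ i ∈ t, f i b ^ p i ≤ ∏ i ∈ t, (∑ b ∈ s, f i b) ^ p i := by
  let _ : MeasurableSpace β := ⊤
  have hsum (g : β → ℝ≥0∞) : ∫⁻ b in s, g b ∂Measure.count = ∑ b ∈ s, g b := by
    simp [lintegral_finset]
  simpa only [hsum] using lintegral_prod_norm_pow_le (μ := Measure.count.restrict ↑s) t
    (fun i _ => (measurable_from_top (f := f i)).aemeasurable) hp hp₀

theorem ENNReal.natCast_le_rpow_inv_iff {x y m : ℕ} (hm : m ≠ 0) :
    (x : ℝ≥0∞) ≤ (y : ℝ≥0∞) ^ (m⁻¹ : ℝ) ↔ x ^ m ≤ y := by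
  rw [ENNReal.le_rpow_inv_iff (by positivity), ENNReal.rpow_natCast]
  norm_cast

theorem Pi.eq_of_toLex_le_update {ι α : Type*} [LinearOrder ι] [WellFoundedLT ι] [LinearOrder α]
    {u v : ι → α} {j : ι} (huv : toLex u ≤ toLex (Function.update v j (u j)))
    (hvu : toLex v ≤ toLex (Function.update u j (v j))) {i : ι} (hij : i ≠ j) : u i = v i := by
  induction i using WellFoundedLT.induction with
  | _ i ih =>
  have agree (w w' : ι → α) (hw : ∀ k < i, k ≠ j → w k = w' k) :
      ∀ k < i, w k = Function.update w' j (w j) k := by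
    intro k hk
    obtain rfl | hkj := eq_or_ne k j
    · simp
    · simp [hkj, hw k hk hkj]
  refine le_antisymm ?_ ?_
  · simpa [hij] using apply_le_of_toLex huv (agree u v fun k hk hkj => ih k hk hkj)
  · simpa [hij] using apply_le_of_toLex hvu (agree v u fun k hk hkj => (ih k hk hkj).symm)

namespace Finset

section LoomisWhitney

variable {ι α : Type*} [DecidableEq α]

theorem card_image_restrict_le_of_subset (S : Finset (ι → α)) {J J' : Finset ι} (h : J ⊆ J') :
    #(S.image J.restrict) ≤ #(S.image J'.restrict) := by
  rw [← restrict₂_comp_restrict h, ← image_image]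
  exact card_image_le

theorem card_image_restrict_eq_sum_card_fiber (R : Finset (ι → α)) {J : Finset ι} {j : ι}
    (hj : j ∈ J) :
    #(R.image J.restrict) =
      ∑ a ∈ R.image (· j), #((R.filter (· j = a)).image J.restrict) := by
  rw [card_eq_sum_card_fiberwise (f := fun g => g ⟨j, hj⟩) (t := R.image (· j))]
  · simp only [filter_image]
    rfl
  · intro g hg
    obtain ⟨f, hf, rfl⟩ := mem_image.1 hg
    exact mem_image_of_mem _ hf

theorem card_image_restrict_erase_of_forall_eq [DecidableEq ι] {T : Finset (ι → α)}
    {U : Finset ι} {j : ι} (hj : j ∈ U) {a : α} (hT : ∀ f ∈ T, f j = a) :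
    #(T.image (U.erase j).restrict) = #(T.image U.restrict) := by
  rw [← restrict₂_comp_restrict (erase_subset j U), ← image_image]
  refine card_image_of_injOn ?_
  simp only [Set.InjOn, coe_image, Set.mem_image, mem_coe]
  rintro _ ⟨f, hf, rfl⟩ _ ⟨f', hf', rfl⟩ hff'
  funext ⟨i, hi⟩
  obtain rfl | hij := eq_or_ne i j
  · simp [hT f hf, hT f' hf']
  · exact congrFun hff' ⟨i, mem_erase.2 ⟨hij, hi⟩⟩

theorem card_image_restrict_pow_le_prod [DecidableEq ι] {R : Finset (ι → α)} (hR : R.Nonempty)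
    (U : Finset ι) :
    #(R.image U.restrict) ^ (#U - 1) ≤ ∏ j ∈ U, #(R.image (U.erase j).restrict) := by
  induction U using Finset.strongInduction generalizing R with | H U ih =>
  by_cases hU : #U ≤ 1
  · rw [Nat.sub_eq_zero_of_le hU, pow_zero]
    exact prod_pos fun j _ => card_pos.2 (hR.image _)
  obtain ⟨j₀, hj₀⟩ := card_pos.1 (by omega : 0 < #U)
  have hm : #(U.erase j₀) ≠ 0 := by
    rw [card_erase_of_mem hj₀]
    omega
  set U' := U.erase j₀
  set m := #U'
  set S : α → Finset (ι → α) := fun a => R.filter (· j₀ = a)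
  have hS (a) (ha : a ∈ R.image (· j₀)) : (S a).Nonempty := by
    obtain ⟨f, hf, rfl⟩ := mem_image.1 ha
    exact ⟨f, mem_filter.2 ⟨hf, rfl⟩⟩
  have hm₀ : (0 : ℝ) ≤ (m⁻¹ : ℝ) := by positivity
  have slice_le (a) (ha : a ∈ R.image (· j₀)) : (#((S a).image U'.restrict) : ℝ≥0∞) ≤
      (#(R.image U'.restrict) * ∏ j ∈ U', #((S a).image (U'.erase j).restrict) : ℕ) ^
        (m⁻¹ : ℝ) := by
    rw [ENNReal.natCast_le_rpow_inv_iff hm, ← Nat.succ_pred_eq_of_ne_zero hm, pow_succ']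
    exact Nat.mul_le_mul (card_le_card (image_subset_image (filter_subset _ _)))
      (ih U' (erase_ssubset hj₀) (hS a ha))
  have sum_slices_le (j) (hj : j ∈ U') :
      ∑ a ∈ R.image (· j₀), #((S a).image (U'.erase j).restrict) ≤
        #(R.image (U.erase j).restrict) := by
    rw [card_image_restrict_eq_sum_card_fiber R (mem_erase.2 ⟨(ne_of_mem_erase hj).symm, hj₀⟩)]
    exact sum_le_sum fun a _ => card_image_restrict_le_of_subset _
      (erase_subset_erase j (erase_subset j₀ U))
  suffices (#(R.image U.restrict) : ℝ≥0∞) ≤ (∏ j ∈ U, #(R.image (U.erase j).restrict) : ℕ) ^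
      (m⁻¹ : ℝ) by
    rw [← card_erase_of_mem hj₀]
    rwa [ENNReal.natCast_le_rpow_inv_iff hm] at this
  calc (#(R.image U.restrict) : ℝ≥0∞)
      = ∑ a ∈ R.image (· j₀), (#((S a).image U'.restrict) : ℝ≥0∞) := by
        rw [card_image_restrict_eq_sum_card_fiber R hj₀, Nat.cast_sum]
        refine sum_congr rfl fun a _ => ?_
        rw [card_image_restrict_erase_of_forall_eq hj₀ fun f hf => (mem_filter.1 hf).2]
    _ ≤ ∑ a ∈ R.image (· j₀), ((#(R.image U'.restrict) : ℝ≥0∞) ^ (m⁻¹ : ℝ) *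
          ∏ j ∈ U', (#((S a).image (U'.erase j).restrict) : ℝ≥0∞) ^ (m⁻¹ : ℝ)) := by
        refine sum_le_sum fun a ha => (slice_le a ha).trans_eq ?_
        push_cast
        rw [ENNReal.mul_rpow_of_nonneg _ _ hm₀, ENNReal.prod_rpow_of_nonneg hm₀]
    _ ≤ (#(R.image U'.restrict) : ℝ≥0∞) ^ (m⁻¹ : ℝ) *
          ∏ j ∈ U', (∑ a ∈ R.image (· j₀), (#((S a).image (U'.erase j).restrict) : ℝ≥0∞)) ^
            (m⁻¹ : ℝ) := by
        rw [← mul_sum]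
        gcongr
        refine ENNReal.sum_prod_rpow_le_prod_sum_rpow _ _ _ ?_ fun _ _ => hm₀
        rw [sum_const, nsmul_eq_mul]
        exact mul_inv_cancel₀ (by exact_mod_cast hm)
    _ ≤ (#(R.image U'.restrict) : ℝ≥0∞) ^ (m⁻¹ : ℝ) *
          ∏ j ∈ U', (#(R.image (U.erase j).restrict) : ℝ≥0∞) ^ (m⁻¹ : ℝ) := by
        refine mul_le_mul_right (prod_le_prod' fun j hj => ?_) _
        exact ENNReal.rpow_le_rpow (by exact_mod_cast sum_slices_le j hj) hm₀
    _ = _ := by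
        rw [ENNReal.prod_rpow_of_nonneg hm₀, ← ENNReal.mul_rpow_of_nonneg _ _ hm₀, Nat.cast_prod]
        exact congrArg (· ^ (m⁻¹ : ℝ))
          (mul_prod_erase U (fun j => (#(R.image (U.erase j).restrict) : ℝ≥0∞)) hj₀)

end LoomisWhitney

section Sumsets

variable {G : Type*} [AddCommGroup G] [DecidableEq G]

theorem mem_nsmul_iff_sum {A : Finset G} {n : ℕ} {s : G} :
    s ∈ n • A ↔ ∃ w : Fin n → G, (∀ i, w i ∈ A) ∧ ∑ i, w i = s := by
  rw [← mem_coe, coe_nsmul, Set.mem_nsmul_iff_sum]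
  rfl

theorem sum_mem_card_nsmul {ι : Type*} (A : Finset G) (t : Finset ι) {w : ι → G}
    (hw : ∀ i ∈ t, w i ∈ A) : ∑ i ∈ t, w i ∈ #t • A := by
  rw [← mem_coe, coe_nsmul, ← sum_const]
  exact Set.finsetSum_mem_finsetSum t _ w hw

end Sumsets

section LexMinReps

variable {G : Type*} [AddCommGroup G] [LinearOrder G]

open Classical in
noncomputable def lexMinReps (A : Finset G) (n : ℕ) : Finset (Fin n → G) :=
  (Fintype.piFinset fun _ => A).filter fun w =>
    ∀ w' ∈ Fintype.piFinset (fun _ => A), ∑ i, w' i = ∑ i, w i → toLex w ≤ toLex w'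

variable {A : Finset G} {n : ℕ}

theorem mem_lexMinReps {w : Fin n → G} :
    w ∈ lexMinReps A n ↔ (∀ i, w i ∈ A) ∧
      ∀ w' : Fin n → G, (∀ i, w' i ∈ A) → ∑ i, w' i = ∑ i, w i → toLex w ≤ toLex w' := by
  simp [lexMinReps]

theorem card_lexMinReps [DecidableEq G] (A : Finset G) (n : ℕ) :
    #(lexMinReps A n) = #(n • A) := by
  refine card_nbij (fun w => ∑ i, w i) (fun w hw => ?_) (fun u hu v hv huv => ?_) fun s hs => ?_
  · exact mem_nsmul_iff_sum.2 ⟨w, (mem_lexMinReps.1 hw).1, rfl⟩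
  · obtain ⟨huA, hu⟩ := mem_lexMinReps.1 hu
    obtain ⟨hvA, hv⟩ := mem_lexMinReps.1 hv
    exact toLex.injective (le_antisymm (hu v hvA huv.symm) (hv u huA huv))
  · obtain ⟨w, hwA, rfl⟩ := mem_nsmul_iff_sum.1 (mem_coe.1 hs)
    obtain ⟨u, hu, hmin⟩ := exists_min_image
      ((Fintype.piFinset fun _ => A).filter fun u => ∑ i, u i = ∑ i, w i) toLex
      ⟨w, mem_filter.2 ⟨Fintype.mem_piFinset.2 hwA, rfl⟩⟩
    obtain ⟨huA, hus⟩ := mem_filter.1 hu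
    refine ⟨u, mem_lexMinReps.2 ⟨Fintype.mem_piFinset.1 huA, fun w' hw' hw'u => ?_⟩, hus⟩
    exact hmin w' (mem_filter.2 ⟨Fintype.mem_piFinset.2 hw', hw'u.trans hus⟩)

theorem eq_of_mem_lexMinReps_of_sum_erase_eq {u v : Fin n → G} (hu : u ∈ lexMinReps A n)
    (hv : v ∈ lexMinReps A n) {j : Fin n}
    (h : ∑ i ∈ univ.erase j, u i = ∑ i ∈ univ.erase j, v i) {i : Fin n} (hij : i ≠ j) :
    u i = v i := by
  have swap {u v : Fin n → G} (hu : u ∈ lexMinReps A n) (hv : ∀ i, v i ∈ A)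
      (h : ∑ i ∈ univ.erase j, u i = ∑ i ∈ univ.erase j, v i) :
      toLex u ≤ toLex (Function.update v j (u j)) := by
    refine (mem_lexMinReps.1 hu).2 _ (fun i => ?_) ?_
    · obtain rfl | hij := eq_or_ne i j
      · simpa using (mem_lexMinReps.1 hu).1 i
      · simpa [hij] using hv i
    · rw [sum_update_of_mem (mem_univ j), sdiff_singleton_eq_erase, ← h,
        add_sum_erase _ _ (mem_univ j)]
  exact Pi.eq_of_toLex_le_update (swap hu (mem_lexMinReps.1 hv).1 h)
    (swap hv (mem_lexMinReps.1 hu).1 h.symm) hij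

theorem card_image_restrict_lexMinReps_le [DecidableEq G] (A : Finset G) (k : ℕ)
    (j : Fin (k + 1)) :
    #((lexMinReps A (k + 1)).image (univ.erase j).restrict) ≤ #(k • A) := by
  refine card_le_card_of_injOn (fun g => ∑ i, g i) ?_ ?_
  · simp only [Set.MapsTo, coe_image, Set.mem_image, mem_coe, forall_exists_index, and_imp]
    rintro _ w hw rfl
    have := sum_mem_card_nsmul A (univ.erase j) fun i _ => (mem_lexMinReps.1 hw).1 i
    rwa [card_erase_of_mem (mem_univ j), card_univ, Fintype.card_fin, add_tsub_cancel_right,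
      ← sum_coe_sort] at this
  · simp only [Set.InjOn, coe_image, Set.mem_image, mem_coe]
    rintro _ ⟨u, hu, rfl⟩ _ ⟨v, hv, rfl⟩ huv
    funext ⟨i, hi⟩
    refine eq_of_mem_lexMinReps_of_sum_erase_eq hu hv ?_ (ne_of_mem_erase hi)
    exact (sum_coe_sort _ u).symm.trans (huv.trans (sum_coe_sort _ v))

end LexMinReps

end Finset

theorem stmt_19_general {G : Type*} [AddCommGroup G] [DecidableEq G]
    (A : Finset G) (hA : A.Nonempty) (k : ℕ) :
    ((k + 1) • A).card ^ k ≤ (k • A).card ^ (k + 1) := by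
  let : LinearOrder G := IsWellOrder.linearOrder WellOrderingRel
  have hR : (lexMinReps A (k + 1)).Nonempty := by
    rw [← card_pos, card_lexMinReps]
    exact hA.nsmul.card_pos
  have lw := card_image_restrict_pow_le_prod hR univ
  rw [card_image_of_injective _ (fun f g h => funext fun i => congrFun h ⟨i, mem_univ i⟩),
    card_lexMinReps, card_univ, Fintype.card_fin, add_tsub_cancel_right] at lw
  calc #((k + 1) • A) ^ k
      ≤ ∏ j : Fin (k + 1), #((lexMinReps A (k + 1)).image (univ.erase j).restrict) := lw
    _ ≤ ∏ _j : Fin (k + 1), #(k • A) :=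
        prod_le_prod' fun j _ => card_image_restrict_lexMinReps_le A k j
    _ = #(k • A) ^ (k + 1) := by simp

theorem stmt_19 {G : Type*} [AddCommGroup G] [DecidableEq G]
    (A : Finset G) (hA : A.Nonempty) (k : ℕ) (hk : 1 ≤ k) :
    ((k + 1) • A).card ^ k ≤ (k • A).card ^ (k + 1) :=
  stmt_19_general A hA k
end
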